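/- Let y ∈ ℝ, let b_1,…,b_r be pairwise distinct reals with b_k < y for all k, and let c_1,…,c_s be pairwise distinct reals with c_l > y for all l (so all r+s numbers are pairwise distinct). For integers k, l with 1 ≤ k ≤ r and 1 ≤ l ≤ s define β_{k,l} := Δ[(·−y)_−^{k+l−1} : b_1,…,b_k,c_1,…,c_l], and set β_{0,l} := 0 for all l ≥ 1 and β_{k,0} := 1 for all k ≥ 1. Then for all (k,l) with 1 ≤ k ≤ r and 1 ≤ l ≤ s, β_{k,l} = ( (c_l − y)·β_{k−1,l} + (y − b_k)·β_{k,l−1} ) / (c_l − b_k). -/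
import Mathlib


open MeasureTheory ProbabilityTheory Finset

noncomputable section

namespace ChoquetPaper

variable {n : ℕ} {Ω : Type*}

/-- `ν_i^σ := ν({σ(1),…,σ(i)})` (here `i : ℕ`, `0 ≤ i ≤ n`). -/
def nuSig (ν : Finset (Fin n) → ℝ) (σ : Equiv.Perm (Fin n)) (i : ℕ) : ℝ :=
  ν ((Finset.univ.filter (fun j : Fin n => (j : ℕ) < i)).image σ)

/-- The Choquet sum `Σ_{i=1}^n p_i^{ν,σ} x_{σ(i)}` w.r.t. a fixed permutation `σ`. -/
def choquetPerm (ν : Finset (Fin n) → ℝ) (σ : Equiv.Perm (Fin n)) (x : Fin n → ℝ) : ℝ :=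
  ∑ i : Fin n, (nuSig ν σ ((i : ℕ) + 1) - nuSig ν σ (i : ℕ)) * x (σ i)

/-- A permutation `σ` such that `x_{σ(1)} ≥ ⋯ ≥ x_{σ(n)}`. -/
def sortDesc (x : Fin n → ℝ) : Equiv.Perm (Fin n) :=
  (Fin.revPerm).trans (Tuple.sort x)

/-- The discrete Choquet integral `C_ν(x)`. -/
def choquet (ν : Finset (Fin n) → ℝ) (x : Fin n → ℝ) : ℝ :=
  choquetPerm ν (sortDesc x) x

/-- The `i`-th order statistic `X_{i:n}` (1-based), with the convention `X_{0:n} := 0`. -/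
def orderStat (X : Fin n → Ω → ℝ) (i : ℕ) (ω : Ω) : ℝ :=
  if h : i - 1 < n ∧ 1 ≤ i then X (Tuple.sort (fun j => X j ω) ⟨i - 1, h.1⟩) ω else 0

/-- `Y_ν^σ := Σ_{i=1}^n p_i^{ν,σ} X_{n−i+1:n}`. -/
def Ysig (ν : Finset (Fin n) → ℝ) (σ : Equiv.Perm (Fin n)) (X : Fin n → Ω → ℝ) (ω : Ω) : ℝ :=
  ∑ i : Fin n, (nuSig ν σ ((i : ℕ) + 1) - nuSig ν σ (i : ℕ)) * orderStat X (n - (i : ℕ)) ω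

/-- plus truncated power function -/
def tpowPos (t : ℝ) (m : ℕ) : ℝ := if 0 < t then t ^ m else 0

/-- minus truncated power function -/
def tpowNeg (t : ℝ) (m : ℕ) : ℝ := if t < 0 then t ^ m else 0

/-- divided difference at pairwise distinct points indexed by a finite set -/
def ddiff {ι : Type*} [DecidableEq ι] (g : ℝ → ℝ) (s : Finset ι) (a : ι → ℝ) : ℝ :=
  ∑ i ∈ s, g (a i) / ∏ j ∈ s.erase i, (a i - a j)



lemma tpowNeg_succ (t : ℝ) (m : ℕ) : tpowNeg t (m + 1) = t * tpowNeg t m := by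
  unfold tpowNeg; split <;> simp [pow_succ']

lemma ddiff_congr {ι : Type*} [DecidableEq ι] {f g : ℝ → ℝ} {S : Finset ι} {a : ι → ℝ}
    (h : ∀ i ∈ S, f (a i) = g (a i)) : ddiff f S a = ddiff g S a :=
  Finset.sum_congr rfl fun i hi => by rw [h i hi]

lemma ddiff_mul_linear {ι : Type*} [DecidableEq ι] (f : ℝ → ℝ) (α : ℝ) (S : Finset ι)
    (a : ι → ℝ) (ha : Set.InjOn a S) {p : ι} (hp : p ∈ S) :
    ddiff (fun t => (t - α) * f t) S a
      = (a p - α) * ddiff f S a + ddiff f (S.erase p) a := by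
  unfold ddiff
  rw [Finset.mul_sum]
  have key : ∀ i ∈ S, ((a i - α) * f (a i)) / ∏ j ∈ S.erase i, (a i - a j)
      = (a p - α) * (f (a i) / ∏ j ∈ S.erase i, (a i - a j))
        + (a i - a p) * f (a i) / ∏ j ∈ S.erase i, (a i - a j) := by
    intro i hi
    have h1 : (a i - α) = (a p - α) + (a i - a p) := by ring
    rw [h1]; ring
  rw [Finset.sum_congr rfl key, Finset.sum_add_distrib]
  congr 1
  rw [← Finset.sum_erase_add S _ hp, sub_self, zero_mul, zero_div, add_zero]
  refine Finset.sum_congr rfl fun i hi => ?_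
  have hiS : i ∈ S := Finset.mem_of_mem_erase hi
  have hip : i ≠ p := Finset.ne_of_mem_erase hi
  have hpe : p ∈ S.erase i := Finset.mem_erase.mpr ⟨fun h => hip h.symm, hp⟩
  rw [← Finset.mul_prod_erase _ _ hpe]
  have hne : a i - a p ≠ 0 := sub_ne_zero.mpr (fun h => hip (ha hiS hp h))
  rw [mul_div_mul_left _ _ hne, Finset.erase_right_comm]

lemma ddiff_pow (y : ℝ) : ∀ (n : ℕ) {ι : Type*} [DecidableEq ι] (S : Finset ι) (a : ι → ℝ),
    S.card = n → Set.InjOn a S → ∀ d : ℕ, d + 1 ≤ n →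
    ddiff (fun t => (t - y) ^ d) S a = if d + 1 = n then 1 else 0 := by
  intro n
  induction n using Nat.strong_induction_on with
  | _ n IH =>
    intro ι _ S a hcard ha d hd
    have hzero : ∀ d' : ℕ, d' + 1 < n → ddiff (fun t => (t - y) ^ d') S a = 0 := by
      intro d' hd'
      have h2 : 1 < S.card := by omega
      obtain ⟨p, hp, q, hq, hpq⟩ := Finset.one_lt_card.mp h2
      have h1 := ddiff_mul_linear (fun t => (t - y) ^ d') 0 S a ha hp
      have h2' := ddiff_mul_linear (fun t => (t - y) ^ d') 0 S a ha hq
      have hcp : (S.erase p).card = n - 1 := by rw [Finset.card_erase_of_mem hp, hcard]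
      have hcq : (S.erase q).card = n - 1 := by rw [Finset.card_erase_of_mem hq, hcard]
      have hap : ddiff (fun t => (t - y) ^ d') (S.erase p) a = if d' + 1 = n - 1 then 1 else 0 :=
        IH (n-1) (by omega) _ a hcp (ha.mono (Finset.erase_subset _ _)) d' (by omega)
      have haq : ddiff (fun t => (t - y) ^ d') (S.erase q) a = if d' + 1 = n - 1 then 1 else 0 :=
        IH (n-1) (by omega) _ a hcq (ha.mono (Finset.erase_subset _ _)) d' (by omega)
      have hne : a p - a q ≠ 0 := sub_ne_zero.mpr (fun h => hpq (ha hp hq h))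
      have heq := h1.symm.trans h2'
      have hmul : (a p - a q) * ddiff (fun t => (t - y) ^ d') S a = 0 := by
        rw [hap, haq] at heq
        linear_combination heq
      exact (mul_eq_zero.mp hmul).resolve_left hne
    by_cases hcase : d + 1 = n
    · rw [if_pos hcase]
      rcases Nat.eq_zero_or_pos d with hd0 | hd1
      · subst hd0
        obtain ⟨x, hx⟩ := Finset.card_eq_one.mp (by omega : S.card = 1)
        subst hx
        simp [ddiff]
      · obtain ⟨p, hp⟩ := Finset.card_pos.mp (by omega : 0 < S.card)
        have hfun : (fun t : ℝ => (t - y) ^ d) = fun t => (t - y) * (t - y) ^ (d - 1) := by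
          funext t
          rw [← pow_succ']
          congr 1
          omega
        rw [hfun, ddiff_mul_linear _ _ _ _ ha hp]
        have hA : ddiff (fun t => (t - y) ^ (d - 1)) S a = 0 := hzero (d - 1) (by omega)
        have hB : ddiff (fun t => (t - y) ^ (d - 1)) (S.erase p) a = 1 := by
          have hcp : (S.erase p).card = n - 1 := by rw [Finset.card_erase_of_mem hp, hcard]
          have := IH (n-1) (by omega) (S.erase p) a hcp
            (ha.mono (Finset.erase_subset _ _)) (d - 1) (by omega)
          rwa [if_pos (by omega)] at this
        rw [hA, hB]; ring
    · rw [if_neg hcase]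
      exact hzero d (by omega)

lemma ddiff_tpow_zero {ι : Type*} [DecidableEq ι] (y : ℝ) (m : ℕ) (S : Finset ι) (a : ι → ℝ)
    (h : ∀ i ∈ S, y < a i) : ddiff (fun t => tpowNeg (t - y) m) S a = 0 := by
  unfold ddiff
  refine Finset.sum_eq_zero fun i hi => ?_
  show tpowNeg (a i - y) m / _ = 0
  have h0 : tpowNeg (a i - y) m = 0 := by
    unfold tpowNeg
    rw [if_neg (by linarith [h i hi])]
  rw [h0, zero_div]

lemma card_filter_lt (r k : ℕ) (hk : k ≤ r) :
    ((Finset.univ : Finset (Fin r)).filter (fun i : Fin r => (i : ℕ) < k)).card = k := by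
  have h : ((Finset.univ : Finset (Fin r)).filter (fun i : Fin r => (i : ℕ) < k))
      = (Finset.univ : Finset (Fin k)).map (Fin.castLEEmb hk) := by
    ext i
    simp only [Finset.mem_filter, Finset.mem_univ, true_and, Finset.mem_map,
      Fin.castLEEmb_apply]
    constructor
    · intro hik
      exact ⟨⟨i, hik⟩, rfl⟩
    · rintro ⟨j, rfl⟩
      exact j.isLt
  rw [h, Finset.card_map, Finset.card_univ, Fintype.card_fin]

/-- the de Boor–Varsi recurrence for divided differences of minus truncated power
functions. -/
theorem statement19 (r s : ℕ) (hr : 1 ≤ r) (hs : 1 ≤ s) (y : ℝ)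
    (b : Fin r → ℝ) (c : Fin s → ℝ)
    (hb : Function.Injective b) (hc : Function.Injective c)
    (hby : ∀ k, b k < y) (hcy : ∀ l, y < c l)
    (β : ℕ → ℕ → ℝ)
    (hβ1 : ∀ l, 1 ≤ l → β 0 l = 0) (hβ2 : ∀ k, 1 ≤ k → β k 0 = 1)
    (hβ : ∀ k l : ℕ, 1 ≤ k → k ≤ r → 1 ≤ l → l ≤ s →
      β k l = ddiff (fun t => tpowNeg (t - y) (k + l - 1))
        ((Finset.univ.filter (fun i : Fin r => (i : ℕ) < k)).disjSum
          (Finset.univ.filter (fun j : Fin s => (j : ℕ) < l)))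
        (Sum.elim b c)) :
    ∀ (k l : ℕ) (hk1 : 1 ≤ k) (hk2 : k ≤ r) (hl1 : 1 ≤ l) (hl2 : l ≤ s),
      β k l = ((c ⟨l - 1, by omega⟩ - y) * β (k - 1) l +
          (y - b ⟨k - 1, by omega⟩) * β k (l - 1)) /
        (c ⟨l - 1, by omega⟩ - b ⟨k - 1, by omega⟩) := by
  intro k l hk1 hk2 hl1 hl2
  have hinj : Function.Injective (Sum.elim b c) := by
    rintro (i | i) (j | j) h
    · exact congrArg Sum.inl (hb h)
    · exact absurd h ((hby i).trans (hcy j)).ne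
    · exact absurd h ((hby j).trans (hcy i)).ne'
    · exact congrArg Sum.inr (hc h)
  set a : Fin r ⊕ Fin s → ℝ := Sum.elim b c with ha
  set S : Finset (Fin r ⊕ Fin s) := ((Finset.univ.filter (fun i : Fin r => (i : ℕ) < k)).disjSum
      (Finset.univ.filter (fun j : Fin s => (j : ℕ) < l))) with hS
  have hInj : Set.InjOn a S := fun x _ z _ h => hinj h
  have hpmem : (Sum.inl ⟨k - 1, by omega⟩ : Fin r ⊕ Fin s) ∈ S := by
    simp only [hS, Finset.inl_mem_disjSum, Finset.mem_filter, Finset.mem_univ, true_and]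
    omega
  have hqmem : (Sum.inr ⟨l - 1, by omega⟩ : Fin r ⊕ Fin s) ∈ S := by
    simp only [hS, Finset.inr_mem_disjSum, Finset.mem_filter, Finset.mem_univ, true_and]
    omega
  have hfun : (fun t : ℝ => tpowNeg (t - y) (k + l - 1))
      = fun t => (t - y) * tpowNeg (t - y) (k + l - 2) := by
    funext t
    rw [← tpowNeg_succ]
    congr 1
    omega
  have E1 : β k l = (b ⟨k - 1, by omega⟩ - y)
        * ddiff (fun t => tpowNeg (t - y) (k + l - 2)) S a
      + ddiff (fun t => tpowNeg (t - y) (k + l - 2))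
          (S.erase (Sum.inl ⟨k - 1, by omega⟩)) a := by
    rw [hβ k l hk1 hk2 hl1 hl2, hfun]
    exact ddiff_mul_linear _ y S a hInj hpmem
  have E2 : β k l = (c ⟨l - 1, by omega⟩ - y)
        * ddiff (fun t => tpowNeg (t - y) (k + l - 2)) S a
      + ddiff (fun t => tpowNeg (t - y) (k + l - 2))
          (S.erase (Sum.inr ⟨l - 1, by omega⟩)) a := by
    rw [hβ k l hk1 hk2 hl1 hl2, hfun]
    exact ddiff_mul_linear _ y S a hInj hqmem
  have HP : ddiff (fun t => tpowNeg (t - y) (k + l - 2))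
      (S.erase (Sum.inl ⟨k - 1, by omega⟩)) a = β (k - 1) l := by
    by_cases hk : k = 1
    · have h0 : β (k - 1) l = 0 := by
        have hk0 : k - 1 = 0 := by omega
        rw [hk0]
        exact hβ1 l hl1
      rw [h0]
      apply ddiff_tpow_zero
      intro x hx
      obtain ⟨hxne, hxS⟩ := Finset.mem_erase.mp hx
      rcases x with i | j
      · exfalso
        apply hxne
        have : (i : ℕ) < k := by
          have := (Finset.inl_mem_disjSum).mp hxS
          simpa using this
        have : (i : ℕ) = k - 1 := by omega
        simp only [Sum.inl.injEq, Fin.ext_iff]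
        exact this
      · exact hcy j
    · have hset : S.erase (Sum.inl ⟨k - 1, by omega⟩)
          = ((Finset.univ.filter (fun i : Fin r => (i : ℕ) < k - 1)).disjSum
            (Finset.univ.filter (fun j : Fin s => (j : ℕ) < l))) := by
        ext x
        rcases x with i | j
        · simp only [hS, Finset.mem_erase, Finset.inl_mem_disjSum, Finset.mem_filter,
            Finset.mem_univ, true_and, ne_eq, Sum.inl.injEq, Fin.ext_iff]
          omega
        · simp [hS]
      rw [hset, hβ (k - 1) l (by omega) (by omega) hl1 hl2]
      have hexp : k - 1 + l - 1 = k + l - 2 := by omega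
      rw [hexp]
  have HQ : ddiff (fun t => tpowNeg (t - y) (k + l - 2))
      (S.erase (Sum.inr ⟨l - 1, by omega⟩)) a = β k (l - 1) := by
    by_cases hl : l = 1
    · have h1' : β k (l - 1) = 1 := by
        have hl0 : l - 1 = 0 := by omega
        rw [hl0]
        exact hβ2 k hk1
      rw [h1']
      have hset : S.erase (Sum.inr ⟨l - 1, by omega⟩)
          = ((Finset.univ.filter (fun i : Fin r => (i : ℕ) < k)).disjSum
            (∅ : Finset (Fin s))) := by
        ext x
        rcases x with i | j
        · simp [hS]
        · simp only [hS, Finset.mem_erase, Finset.inr_mem_disjSum, Finset.mem_filter,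
            Finset.mem_univ, true_and, ne_eq, Sum.inr.injEq, Fin.ext_iff,
            Finset.notMem_empty, iff_false, not_and]
          intro hne
          omega
      rw [hset]
      have hcard : (((Finset.univ.filter (fun i : Fin r => (i : ℕ) < k)).disjSum
          (∅ : Finset (Fin s)))).card = k := by
        rw [Finset.card_disjSum, card_filter_lt r k hk2, Finset.card_empty, add_zero]
      have hinj2 : Set.InjOn a (((Finset.univ.filter (fun i : Fin r => (i : ℕ) < k)).disjSum
          (∅ : Finset (Fin s))) : Finset (Fin r ⊕ Fin s)) := fun x _ z _ h => hinj h
      have hpow := ddiff_pow y k _ a hcard hinj2 (k - 1) (by omega)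
      rw [if_pos (by omega)] at hpow
      rw [← hpow]
      apply ddiff_congr
      intro x hx
      rcases x with i | j
      · show tpowNeg (b i - y) (k + l - 2) = (b i - y) ^ (k - 1)
        have hexp : k + l - 2 = k - 1 := by omega
        rw [hexp]
        unfold tpowNeg
        rw [if_pos (by linarith [hby i])]
      · exact absurd ((Finset.inr_mem_disjSum).mp hx) (Finset.notMem_empty j)
    · have hset : S.erase (Sum.inr ⟨l - 1, by omega⟩)
          = ((Finset.univ.filter (fun i : Fin r => (i : ℕ) < k)).disjSum
            (Finset.univ.filter (fun j : Fin s => (j : ℕ) < l - 1))) := by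
        ext x
        rcases x with i | j
        · simp [hS]
        · simp only [hS, Finset.mem_erase, Finset.inr_mem_disjSum, Finset.mem_filter,
            Finset.mem_univ, true_and, ne_eq, Sum.inr.injEq, Fin.ext_iff]
          omega
      rw [hset, hβ k (l - 1) hk1 hk2 (by omega) (by omega)]
      have hexp : k + (l - 1) - 1 = k + l - 2 := by omega
      rw [hexp]
  have hne : c ⟨l - 1, by omega⟩ - b ⟨k - 1, by omega⟩ ≠ 0 :=
    sub_ne_zero.mpr ((hby _).trans (hcy _)).ne'
  rw [eq_div_iff hne]
  rw [HP] at E1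
  rw [HQ] at E2
  linear_combination (c ⟨l - 1, by omega⟩ - y) * E1 + (y - b ⟨k - 1, by omega⟩) * E2


end ChoquetPaper
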